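/- Let n ≥ 1, and for each i ∈ {1,…,n} let A_i be a nonempty finite action set and Q_i : A_i → ℝ an individual utility function. Let F : (Fin n → ℝ) → ℝ be monotone with respect to the pointwise order on Fin n → ℝ. Then the maximum over all joint actions u = (u_1,…,u_n) ∈ A_1 × ⋯ × A_n of F(Q_1(u_1),…,Q_n(u_n)) equals F(max_{a∈A_1} Q_1(a),…,max_{a∈A_n} Q_n(a)). -/
import Mathlib

/-- For a monotone mixing function `F` and per-agent utilities `Q i`
on nonempty finite action sets `A i`, the maximum over all joint actions of the
joint value equals `F` applied to the per-agent maxima. -/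
theorem max_monotone_mixing_eq_mixing_of_max
    (n : ℕ) (hn : 1 ≤ n)
    (A : Fin n → Type) [∀ i, Fintype (A i)] [∀ i, Nonempty (A i)]
    (Q : ∀ i, A i → ℝ)
    (F : (Fin n → ℝ) → ℝ)
    (hF : ∀ x y : Fin n → ℝ, (∀ i, x i ≤ y i) → F x ≤ F y) :
    (Finset.univ : Finset (∀ i, A i)).sup' Finset.univ_nonempty
        (fun u => F (fun i => Q i (u i))) =
      F (fun i => Finset.univ.sup' Finset.univ_nonempty (Q i)) := by
  apply le_antisymm
  · apply Finset.sup'_le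
    intro u _
    exact hF _ _ fun i => Finset.le_sup' (Q i) (Finset.mem_univ (u i))
  · have h : ∀ i, ∃ a : A i, Finset.univ.sup' Finset.univ_nonempty (Q i) = Q i a := by
      intro i
      obtain ⟨a, _, ha⟩ := Finset.exists_mem_eq_sup' (Finset.univ_nonempty) (Q i)
      exact ⟨a, ha⟩
    choose u hu using h
    calc F (fun i => Finset.univ.sup' Finset.univ_nonempty (Q i))
        ≤ F (fun i => Q i (u i)) := hF _ _ fun i => (hu i).le
      _ ≤ _ := Finset.le_sup' (fun u => F fun i => Q i (u i)) (Finset.mem_univ u)
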